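/- A join-semilattice P embeds as a join-subsemilattice into I_{<ω}(Q) for some poset Q if and only if for every x ∈ P, the set P \ ↑x is a finite (possibly empty) union of ideals. -/

import Mathlib

/-- Finitely generated initial segments of `Q`, ordered by inclusion. -/
def FinGenInitSeg (Q : Type*) [Preorder Q] : Type _ :=
  {S : Set Q // ∃ F : Finset Q, S = {x | ∃ y ∈ F, x ≤ y}}

instance {Q : Type*} [Preorder Q] : PartialOrder (FinGenInitSeg Q) :=
  inferInstanceAs (PartialOrder {S : Set Q // ∃ F : Finset Q, S = {x | ∃ y ∈ F, x ≤ y}})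
instance {Q : Type*} [Preorder Q] : SemilatticeSup (FinGenInitSeg Q) :=
  { (inferInstance : PartialOrder (FinGenInitSeg Q)) with
    sup := fun S T => ⟨S.1 ∪ T.1, by
      classical
      obtain ⟨F, hF⟩ := S.2
      obtain ⟨G, hG⟩ := T.2
      refine ⟨F ∪ G, ?_⟩
      ext x
      simp only [hF, hG, Set.mem_union, Set.mem_setOf_eq, Finset.mem_union]
      constructor
      · rintro (⟨y, hy, hxy⟩ | ⟨y, hy, hxy⟩)
        · exact ⟨y, Or.inl hy, hxy⟩
        · exact ⟨y, Or.inr hy, hxy⟩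
      · rintro ⟨y, hy | hy, hxy⟩
        · exact Or.inl ⟨y, hy, hxy⟩
        · exact Or.inr ⟨y, hy, hxy⟩⟩
    le_sup_left := fun S T => Set.subset_union_left (s := S.1) (t := T.1)
    le_sup_right := fun S T => Set.subset_union_right (s := S.1) (t := T.1)
    sup_le := fun _ _ _ h1 h2 => Set.union_subset h1 h2 }
/-- An ideal of a poset: a nonempty up-directed initial segment. -/
def IsIdeal {α : Type*} [Preorder α] (I : Set α) : Prop :=
  I.Nonempty ∧ (∀ ⦃x y : α⦄, x ≤ y → y ∈ I → x ∈ I) ∧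
    ∀ x ∈ I, ∀ y ∈ I, ∃ z ∈ I, x ≤ z ∧ y ≤ z
/-- `A` embeds into `B` as a join-subsemilattice: an injective map preserving binary joins. -/
def JoinEmbeds (A B : Type*) [SemilatticeSup A] [SemilatticeSup B] : Prop :=
  ∃ f : A → B, Function.Injective f ∧ ∀ x y : A, f (x ⊔ y) = f x ⊔ f y

universe u

/-! If `f : P → I_{<ω}(Q)` is an injective join-homomorphism and `f x` is generated by
`q₁, …, qₙ`, then `P \ ↑x` is the union of the sets `{y | qᵢ ∉ f y}`, each empty or an ideal.
Conversely, let `Q` be the poset of ideals of `P` and send `x` to the ideals contained in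
`P \ ↑x`. An ideal contained in a finite union of initial segments is contained in one of them,
so this set is generated by the finitely many ideals covering `P \ ↑x`, and it turns joins into
unions because `P \ ↑(x ⊔ y) = (P \ ↑x) ∪ (P \ ↑y)`. -/

section Ideals

variable {α : Type*} [Preorder α]

def IsFiniteUnionOfIdeals (D : Set α) : Prop :=
  ∃ 𝓖 : Finset (Set α), (∀ I ∈ 𝓖, IsIdeal I) ∧ D = ⋃₀ ↑𝓖

theorem IsIdeal.isLowerSet {I : Set α} (hI : IsIdeal I) : IsLowerSet I :=
  fun _ _ hxy hy => hI.2.1 hxy hy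

theorem isIdeal_Iic (a : α) : IsIdeal (Set.Iic a) :=
  ⟨⟨a, le_rfl⟩, fun _ _ hxy hy => hxy.trans hy, fun _ hx _ hy => ⟨a, le_rfl, hx, hy⟩⟩

theorem IsIdeal.subset_or_subset_of_subset_union {I A B : Set α} (hI : IsIdeal I)
    (hA : IsLowerSet A) (hB : IsLowerSet B) (h : I ⊆ A ∪ B) : I ⊆ A ∨ I ⊆ B := by
  by_contra! hc
  obtain ⟨a, haI, haA⟩ := Set.not_subset.mp hc.1
  obtain ⟨b, hbI, hbB⟩ := Set.not_subset.mp hc.2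
  obtain ⟨c, hcI, hac, hbc⟩ := hI.2.2 a haI b hbI
  rcases h hcI with hcA | hcB
  · exact haA (hA hac hcA)
  · exact hbB (hB hbc hcB)

theorem IsIdeal.exists_subset_of_subset_sUnion {I : Set α} (hI : IsIdeal I)
    {𝓢 : Finset (Set α)} (h𝓢 : ∀ J ∈ 𝓢, IsLowerSet J) (h : I ⊆ ⋃₀ ↑𝓢) : ∃ J ∈ 𝓢, I ⊆ J := by
  classical
  induction 𝓢 using Finset.induction with
  | empty =>
    obtain ⟨a, ha⟩ := hI.1
    simpa using h ha
  | insert J 𝓢 _ ih =>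
    simp only [Finset.mem_insert, forall_eq_or_imp, Finset.coe_insert, Set.sUnion_insert,
      exists_eq_or_imp] at h𝓢 h ⊢
    exact (hI.subset_or_subset_of_subset_union h𝓢.1 (isLowerSet_sUnion h𝓢.2) h).imp id (ih h𝓢.2)

theorem IsFiniteUnionOfIdeals.isLowerSet {D : Set α} (hD : IsFiniteUnionOfIdeals D) :
    IsLowerSet D := by
  obtain ⟨𝓖, h𝓖, rfl⟩ := hD
  exact isLowerSet_sUnion fun I hI => (h𝓖 I hI).isLowerSet

theorem isFiniteUnionOfIdeals_biUnion {ι : Type*} (F : Finset ι) (A : ι → Set α)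
    (hA : ∀ i ∈ F, (A i).Nonempty → IsIdeal (A i)) : IsFiniteUnionOfIdeals (⋃ i ∈ F, A i) := by
  classical
  refine ⟨(F.image A).filter Set.Nonempty, ?_, ?_⟩
  · simp only [Finset.mem_filter, Finset.mem_image]
    rintro _ ⟨⟨i, hi, rfl⟩, hne⟩
    exact hA i hi hne
  · ext y
    simp only [Set.mem_iUnion, Set.mem_sUnion, Finset.coe_filter, Finset.mem_image,
      Set.mem_ofPred_eq, exists_prop]
    constructor
    · rintro ⟨i, hi, hy⟩
      exact ⟨A i, ⟨⟨i, hi, rfl⟩, y, hy⟩, hy⟩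
    · rintro ⟨_, ⟨⟨i, hi, rfl⟩, -⟩, hy⟩
      exact ⟨i, hi, hy⟩

end Ideals

theorem le_iff_le_of_injective_of_map_sup {A B : Type*} [SemilatticeSup A] [SemilatticeSup B]
    {f : A → B} (hinj : Function.Injective f) (hsup : ∀ x y, f (x ⊔ y) = f x ⊔ f y) {a b : A} :
    f a ≤ f b ↔ a ≤ b := by
  rw [← sup_eq_right, ← sup_eq_right, ← hsup, hinj.eq_iff]

namespace FinGenInitSeg

variable {Q : Type*} [Preorder Q]

theorem le_iff_subset {S T : FinGenInitSeg Q} : S ≤ T ↔ S.1 ⊆ T.1 := Iff.rfl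

theorem val_sup (S T : FinGenInitSeg Q) : (S ⊔ T).1 = S.1 ∪ T.1 := rfl

theorem isLowerSet (S : FinGenInitSeg Q) : IsLowerSet S.1 := by
  obtain ⟨F, hF⟩ := S.2
  rw [hF]
  rintro x y hxy ⟨q, hq, hyq⟩
  exact ⟨q, hq, hxy.trans hyq⟩

theorem le_iff_forall_mem {S T : FinGenInitSeg Q} {F : Finset Q}
    (hF : S.1 = {x | ∃ y ∈ F, x ≤ y}) : S ≤ T ↔ ∀ q ∈ F, q ∈ T.1 := by
  rw [le_iff_subset, hF]
  refine ⟨fun h q hq => h ⟨q, hq, le_rfl⟩, ?_⟩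
  rintro h x ⟨q, hq, hxq⟩
  exact T.isLowerSet hxq (h q hq)

end FinGenInitSeg

theorem JoinEmbeds.isFiniteUnionOfIdeals_compl_Ici {P Q : Type*} [SemilatticeSup P]
    [PartialOrder Q] (h : JoinEmbeds P (FinGenInitSeg Q)) (x : P) :
    IsFiniteUnionOfIdeals {y : P | ¬ x ≤ y} := by
  obtain ⟨f, hinj, hsup⟩ := h
  have hle {a b : P} : f a ≤ f b ↔ a ≤ b := le_iff_le_of_injective_of_map_sup hinj hsup
  obtain ⟨F, hF⟩ := (f x).2
  have hcover : {y : P | ¬ x ≤ y} = ⋃ q ∈ F, {y | q ∉ (f y).1} := by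
    ext y
    simp [← hle, FinGenInitSeg.le_iff_forall_mem hF]
  rw [hcover]
  refine isFiniteUnionOfIdeals_biUnion F _ fun q _ hne => ⟨hne, ?_, ?_⟩
  · exact fun a b hab hb hqa => hb (hle.mpr hab hqa)
  · intro a ha b hb
    refine ⟨a ⊔ b, ?_, le_sup_left, le_sup_right⟩
    simp only [Set.mem_ofPred_eq, hsup, FinGenInitSeg.val_sup, Set.mem_union] at ha hb ⊢
    tauto

section IdealsWithin

variable {α : Type*} [Preorder α]

theorem IsFiniteUnionOfIdeals.ideals_subset_finitelyGenerated {D : Set α}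
    (hD : IsFiniteUnionOfIdeals D) :
    ∃ F : Finset {I : Set α // IsIdeal I},
      {I : {I : Set α // IsIdeal I} | I.1 ⊆ D} = {I | ∃ J ∈ F, I ≤ J} := by
  classical
  obtain ⟨𝓖, h𝓖, rfl⟩ := hD
  refine ⟨𝓖.subtype IsIdeal, ?_⟩
  ext I
  simp only [Set.mem_ofPred_eq, Finset.mem_subtype, Subtype.exists]
  constructor
  · intro hI
    obtain ⟨J, hJ, hIJ⟩ :=
      I.2.exists_subset_of_subset_sUnion (fun J hJ => (h𝓖 J hJ).isLowerSet) hI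
    exact ⟨J, h𝓖 J hJ, hJ, hIJ⟩
  · rintro ⟨J, _, hJ, hIJ⟩
    exact fun a ha => Set.subset_sUnion_of_mem hJ (hIJ ha)

def idealsWithin (D : Set α) (hD : IsFiniteUnionOfIdeals D) :
    FinGenInitSeg {I : Set α // IsIdeal I} :=
  ⟨{I | I.1 ⊆ D}, IsFiniteUnionOfIdeals.ideals_subset_finitelyGenerated hD⟩

theorem idealsWithin_union {D E : Set α} (hD : IsFiniteUnionOfIdeals D)
    (hE : IsFiniteUnionOfIdeals E) (hDE : IsFiniteUnionOfIdeals (D ∪ E)) :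
    idealsWithin (D ∪ E) hDE = idealsWithin D hD ⊔ idealsWithin E hE := by
  refine Subtype.ext (Set.ext fun I => ?_)
  exact ⟨fun h => I.2.subset_or_subset_of_subset_union hD.isLowerSet hE.isLowerSet h,
    fun h => h.elim (·.trans Set.subset_union_left) (·.trans Set.subset_union_right)⟩

end IdealsWithin

theorem joinEmbeds_of_isFiniteUnionOfIdeals_compl_Ici {P : Type*} [SemilatticeSup P]
    (h : ∀ x : P, IsFiniteUnionOfIdeals {y : P | ¬ x ≤ y}) :
    JoinEmbeds P (FinGenInitSeg {I : Set P // IsIdeal I}) := by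
  have hcompl (x y : P) : {z : P | ¬ x ⊔ y ≤ z} = {z | ¬ x ≤ z} ∪ {z | ¬ y ≤ z} := by
    ext z
    simp only [Set.mem_ofPred_eq, Set.mem_union, sup_le_iff]
    tauto
  refine ⟨fun x => idealsWithin _ (h x), ?_, fun x y => ?_⟩
  · -- `↓y` lies in `P \ ↑x` iff `¬ x ≤ y`
    have hle {x y : P} (hxy : idealsWithin _ (h x) = idealsWithin _ (h y)) : x ≤ y := by
      have hy : (⟨Set.Iic y, isIdeal_Iic y⟩ : {I : Set P // IsIdeal I}) ∉
          (idealsWithin _ (h y)).1 := fun hsub => hsub le_rfl le_rfl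
      rw [← hxy] at hy
      by_contra hxy'
      exact hy fun z hz hxz => hxy' (hxz.trans hz)
    exact fun x y hxy => le_antisymm (hle hxy) (hle hxy.symm)
  · simp only [hcompl]
    exact idealsWithin_union (h x) (h y) _

/-- a join-semilattice `P` embeds as a join-subsemilattice into some
`I_{<ω}(Q)` iff for every `x ∈ P` the set `P \\ ↑x` is a finite union of ideals. -/
theorem stmt_10 {P : Type u} [SemilatticeSup P] :
    (∃ (Q : Type u) (_ : PartialOrder Q), JoinEmbeds P (FinGenInitSeg Q)) ↔
      ∀ x : P, ∃ 𝓖 : Finset (Set P), (∀ I ∈ 𝓖, IsIdeal I) ∧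
        {y : P | ¬ x ≤ y} = ⋃₀ ↑𝓖 :=
  ⟨fun ⟨_, _, h⟩ => h.isFiniteUnionOfIdeals_compl_Ici,
    fun h => ⟨_, inferInstance, joinEmbeds_of_isFiniteUnionOfIdeals_compl_Ici h⟩⟩
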